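/- arXiv:2103.04853 — 2 statements merged into one kernel-verified Lean document; each statement's English description precedes it below -/
import Mathlib

section
/- Assume k_v + Γ > 0, let 0 < r_l < v_ref, λ ≥ λ_min(r_l), let P_l be a symmetric positive definite 2×2 real matrix and τ > 0 be such that Φ ≺ 0 and the 3×3 matrix [[P_l, Cᵀ], [C, r_l²]] is positive semidefinite. Then for every ε = (ε₁, ε₂) ∈ ℝ² with ε ≠ 0 and εᵀP_lε ≤ 1, one has 2·εᵀ P_l (A ε + φ(ε₁)·B) < 0 (strict Lyapunov decrease on the estimated basin of attraction). -/
open Matrix Real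

/-- The friction nonlinearity `F_nl`. -/
noncomputable def Fnl (m g vs muC muS : ℝ) (v : ℝ) : ℝ :=
  m * g * (muC + (muS - muC) * Real.exp (-(v ^ 2) / vs ^ 2)) * Real.sign v

/-- The set-valued extension `𝔉` of the friction nonlinearity. -/
noncomputable def Ffric (m g vs muC muS : ℝ) (v : ℝ) : Set ℝ :=
  if v = 0 then Set.Icc (-(muS * m * g)) (muS * m * g) else {Fnl m g vs muC muS v}

/-- The shifted nonlinearity `φ(s) = F_nl(s + v_ref) − F_nl(v_ref)`. -/
noncomputable def phi (m g vs muC muS vref : ℝ) (s : ℝ) : ℝ :=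
  Fnl m g vs muC muS (s + vref) - Fnl m g vs muC muS vref

/-- `Γ = −2·m·g·(μ_S − μ_C)·(v_ref/v_s²)·exp(−v_ref²/v_s²)`. -/
noncomputable def Gam (m g vs muC muS vref : ℝ) : ℝ :=
  -2 * m * g * (muS - muC) * (vref / vs ^ 2) * Real.exp (-(vref ^ 2) / vs ^ 2)

/-- `λ_min(r) = sup{−φ(s)/s : s ∈ [−r, r], s ≠ 0}`. -/
noncomputable def lammin (m g vs muC muS vref : ℝ) (r : ℝ) : ℝ :=
  sSup {y : ℝ | ∃ s ∈ Set.Icc (-r) r, s ≠ 0 ∧ y = -phi m g vs muC muS vref s / s}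

/-- `M ≺ 0`: the quadratic form of `M` is negative definite. -/
def NegDef {n : Type*} [Fintype n] (M : Matrix n n ℝ) : Prop :=
  ∀ x : n → ℝ, x ≠ 0 → x ⬝ᵥ M.mulVec x < 0

/-- The dynamics matrix `A`. -/
noncomputable def Amat (m k kv : ℝ) : Matrix (Fin 2) (Fin 2) ℝ := !![-kv / m, -k / m; 1, 0]

/-- The linearized dynamics matrix `A₀`. -/
noncomputable def A0mat (m k kv Γ : ℝ) : Matrix (Fin 2) (Fin 2) ℝ :=
  !![-(kv + Γ) / m, -k / m; 1, 0]

/-- The input vector `B = (−1/m, 0)ᵀ`, as an element of `ℝ²`. -/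
noncomputable def Bvec (m : ℝ) : Fin 2 → ℝ := ![-1 / m, 0]

/-- The input matrix `B = (−1/m, 0)ᵀ`, as a `2×1` matrix. -/
noncomputable def Bmat (m : ℝ) : Matrix (Fin 2) (Fin 1) ℝ := !![-1 / m; 0]

/-- The row matrix `C = (1, 0)`. -/
def Cmat : Matrix (Fin 1) (Fin 2) ℝ := !![1, 0]

/-- The 3×3 matrix `Φ` of the regional stability LMI. -/
noncomputable def PhiMat (m k kv Γ lam τ : ℝ) (Pl : Matrix (Fin 2) (Fin 2) ℝ) :
    Matrix (Fin 2 ⊕ Fin 1) (Fin 2 ⊕ Fin 1) ℝ :=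
  Matrix.fromBlocks
    ((A0mat m k kv Γ)ᵀ * Pl + Pl * A0mat m k kv Γ - (2 * τ * Γ * (Γ + lam)) • (Cmatᵀ * Cmat))
    (Pl * Bmat m - (τ * (2 * Γ + lam)) • Cmatᵀ)
    ((Bmat m)ᵀ * Pl - (τ * (2 * Γ + lam)) • Cmat)
    !![-2 * τ]

lemma Fnl_of_pos (m g vs muC muS : ℝ) {v : ℝ} (hv : 0 < v) :
    Fnl m g vs muC muS v = m * g * (muC + (muS - muC) * Real.exp (-(v ^ 2) / vs ^ 2)) := by
  simp [Fnl, Real.sign_of_pos hv]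

lemma neg_slope_le (m g vs muC muS ζ U : ℝ) (hm : 0 < m) (hg : 0 < g) (hvs : 0 < vs)
    (hmu : muC < muS) (hζ0 : 0 < ζ) (hζle : ζ ≤ U) :
    -(m * g * ((muS - muC) * (Real.exp (-(ζ ^ 2) / vs ^ 2) * (-(2 * ζ) / vs ^ 2)))) ≤
      m * g * ((muS - muC) * (2 * U / vs ^ 2)) := by
  have hE1 : Real.exp (-(ζ ^ 2) / vs ^ 2) ≤ 1 :=
    Real.exp_le_one_iff.mpr (div_nonpos_of_nonpos_of_nonneg (neg_nonpos.mpr (sq_nonneg ζ))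
      (by positivity))
  have hE2 : 0 < Real.exp (-(ζ ^ 2) / vs ^ 2) := Real.exp_pos _
  set E := Real.exp (-(ζ ^ 2) / vs ^ 2) with hE
  have h5 : E * ζ ≤ U := by
    linarith [mul_le_mul_of_nonneg_right hE1 hζ0.le]
  have hcoef : (0:ℝ) ≤ 2 * m * g * (muS - muC) / vs ^ 2 := by
    have := sub_pos.mpr hmu
    positivity
  have h6 := mul_le_mul_of_nonneg_left h5 hcoef
  have h7 : -(m * g * ((muS - muC) * (E * (-(2 * ζ) / vs ^ 2)))) =
      2 * m * g * (muS - muC) / vs ^ 2 * (E * ζ) := by ring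
  have h8 : m * g * ((muS - muC) * (2 * U / vs ^ 2)) =
      2 * m * g * (muS - muC) / vs ^ 2 * U := by ring
  rw [h7, h8]
  exact h6

lemma slope_rep (m g vs muC muS vref : ℝ) (rl : ℝ)
    (hrlv : rl < vref) (s : ℝ) (hs1 : -rl ≤ s) (hs2 : s ≤ rl) (hs0 : s ≠ 0) :
    ∃ ξ, 0 < ξ ∧ ξ ≤ vref + rl ∧
      phi m g vs muC muS vref s / s
        = m * g * ((muS - muC) * (Real.exp (-(ξ ^ 2) / vs ^ 2) * (-(2 * ξ) / vs ^ 2))) := by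
  set f : ℝ → ℝ := fun v => m * g * (muC + (muS - muC) * Real.exp (-(v ^ 2) / vs ^ 2)) with hf
  set f' : ℝ → ℝ := fun v =>
    m * g * ((muS - muC) * (Real.exp (-(v ^ 2) / vs ^ 2) * (-(2 * v) / vs ^ 2))) with hf'
  have hderiv : ∀ v : ℝ, HasDerivAt f (f' v) v := by
    intro v
    have h1 : HasDerivAt (fun v : ℝ => v ^ 2) (2 * v) v := by
      simpa using hasDerivAt_pow 2 v
    have h2 : HasDerivAt (fun v : ℝ => -(v ^ 2) / vs ^ 2) (-(2 * v) / vs ^ 2) v :=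
      h1.neg.div_const _
    have h3 := h2.exp
    have h4 := (h3.const_mul (muS - muC)).const_add muC
    exact h4.const_mul (m * g)
  have hcont : ∀ (a b : ℝ), ContinuousOn f (Set.Icc a b) := fun a b =>
    fun x _ => (hderiv x).continuousAt.continuousWithinAt
  have hphi : phi m g vs muC muS vref s = f (s + vref) - f vref := by
    rw [phi, Fnl_of_pos m g vs muC muS (by linarith : (0:ℝ) < s + vref),
      Fnl_of_pos m g vs muC muS (by linarith : (0:ℝ) < vref)]
  rcases lt_or_gt_of_ne hs0 with hneg | hpos
  · obtain ⟨ξ, hξ, heq⟩ := exists_hasDerivAt_eq_slope f f'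
      (show vref + s < vref by linarith) (hcont _ _) (fun x _ => hderiv x)
    refine ⟨ξ, by linarith [hξ.1], by linarith [hξ.2], ?_⟩
    rw [hphi]
    show _ = f' ξ
    rw [heq, show vref - (vref + s) = -s from by ring, show s + vref = vref + s from by ring,
      div_neg]
    ring
  · obtain ⟨ξ, hξ, heq⟩ := exists_hasDerivAt_eq_slope f f'
      (show vref < vref + s by linarith) (hcont _ _) (fun x _ => hderiv x)
    refine ⟨ξ, by linarith [hξ.1], by linarith [hξ.2], ?_⟩
    rw [hphi]
    show _ = f' ξ
    rw [heq, show vref + s - vref = s from by ring, show s + vref = vref + s from by ring]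

set_option maxHeartbeats 1000000 in
theorem stmt16 (m g vs k kv muC muS vref : ℝ)
    (hm : 0 < m) (hg : 0 < g) (hvs : 0 < vs) (hk : 0 < k) (hkv : 0 < kv)
    (hmuC : 0 < muC) (hmu : muC < muS) (hvref : 0 < vref)
    (hHurwitz : 0 < kv + Gam m g vs muC muS vref)
    (rl : ℝ) (hrl : 0 < rl) (hrlv : rl < vref)
    (lam : ℝ) (hlam : lammin m g vs muC muS vref rl ≤ lam)
    (Pl : Matrix (Fin 2) (Fin 2) ℝ) (hPl : Pl.PosDef)
    (τ : ℝ) (hτ : 0 < τ)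
    (hPhi : NegDef (PhiMat m k kv (Gam m g vs muC muS vref) lam τ Pl))
    (hblock : (Matrix.fromBlocks Pl Cmatᵀ Cmat !![rl ^ 2]).PosSemidef) :
    ∀ ε1 ε2 : ℝ, ![ε1, ε2] ≠ 0 → ![ε1, ε2] ⬝ᵥ Pl.mulVec ![ε1, ε2] ≤ 1 →
      2 * (![ε1, ε2] ⬝ᵥ Pl.mulVec
          ((Amat m k kv).mulVec ![ε1, ε2] + phi m g vs muC muS vref ε1 • Bvec m)) < 0 := by
  intro ε1 ε2 hne hle
  have hsym : Pl 1 0 = Pl 0 1 := by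
    simpa [Matrix.conjTranspose_apply] using congrFun (congrFun hPl.1 0) 1
  set Γ : ℝ := Gam m g vs muC muS vref with hΓ
  set φv : ℝ := phi m g vs muC muS vref ε1 with hφ
  -- step 1 : ε1² ≤ rl²
  have hε1sq : ε1 ^ 2 ≤ rl ^ 2 := by
    have h := hblock.dotProduct_mulVec_nonneg (Sum.elim ((-ε1) • ![ε1, ε2]) ![1])
    simp [dotProduct, Fintype.sum_sum_type, Matrix.mulVec, Matrix.fromBlocks, Cmat,
      Fin.sum_univ_two, Fin.sum_univ_one] at h
    simp [dotProduct, Matrix.mulVec, Fin.sum_univ_two] at hle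
    nlinarith [sq_nonneg ε1, mul_le_mul_of_nonneg_left hle (sq_nonneg ε1)]
  -- step 2 : sector condition
  have hS : φv * (φv + lam * ε1) ≤ 0 := by
    by_cases h0 : ε1 = 0
    · have hz : φv = 0 := by simp [hφ, phi, h0]
      simp [hz]
    · have hb1 : -rl ≤ ε1 := by nlinarith
      have hb2 : ε1 ≤ rl := by nlinarith
      obtain ⟨ξ, hξ0, hξle, hq⟩ := slope_rep m g vs muC muS vref rl hrlv ε1 hb1 hb2 h0
      have hE0 : 0 < Real.exp (-(ξ ^ 2) / vs ^ 2) := Real.exp_pos _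
      have hqle : φv / ε1 ≤ 0 := by
        rw [← hφ] at hq
        rw [hq]
        have h1 : -(2 * ξ) / vs ^ 2 < 0 := by
          apply div_neg_of_neg_of_pos (by linarith) (by positivity)
        apply mul_nonpos_of_nonneg_of_nonpos (by positivity)
        exact mul_nonpos_of_nonneg_of_nonpos (by linarith)
          (mul_nonpos_of_nonneg_of_nonpos hE0.le h1.le)
      have hbdd : BddAbove {y : ℝ | ∃ s ∈ Set.Icc (-rl) rl, s ≠ 0 ∧
          y = -phi m g vs muC muS vref s / s} := by
        refine ⟨m * g * ((muS - muC) * (2 * (vref + rl) / vs ^ 2)), ?_⟩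
        rintro y ⟨s, hs, hs0, rfl⟩
        obtain ⟨ζ, hζ0, hζle, hq2⟩ := slope_rep m g vs muC muS vref rl hrlv s hs.1 hs.2 hs0
        rw [neg_div, hq2]
        exact neg_slope_le m g vs muC muS ζ (vref + rl) hm hg hvs hmu hζ0 hζle
      have hmem : -φv / ε1 ∈ {y : ℝ | ∃ s ∈ Set.Icc (-rl) rl, s ≠ 0 ∧
          y = -phi m g vs muC muS vref s / s} := ⟨ε1, ⟨hb1, hb2⟩, h0, by rw [hφ]⟩
      have hlam2 : -φv / ε1 ≤ lam := le_trans (le_csSup hbdd hmem) hlam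
      have hqq : φv / ε1 * (φv / ε1 + lam) ≤ 0 := by
        apply mul_nonpos_of_nonpos_of_nonneg hqle
        have : -(φv / ε1) ≤ lam := by rwa [neg_div] at hlam2
        linarith
      have hkey : φv * (φv + lam * ε1) = ε1 ^ 2 * (φv / ε1 * (φv / ε1 + lam)) := by
        field_simp
      rw [hkey]
      exact mul_nonpos_of_nonneg_of_nonpos (sq_nonneg _) hqq
  -- step 3 : apply the LMI
  have hτS : τ * (φv * (φv + lam * ε1)) ≤ 0 :=
    mul_nonpos_of_nonneg_of_nonpos hτ.le hS
  have hxne : (Sum.elim ![ε1, ε2] ![φv - Γ * ε1] : Fin 2 ⊕ Fin 1 → ℝ) ≠ 0 := by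
    intro hz
    apply hne
    funext i
    fin_cases i
    · simpa using congrFun hz (Sum.inl 0)
    · simpa using congrFun hz (Sum.inl 1)
  have hψ := hPhi (Sum.elim ![ε1, ε2] ![φv - Γ * ε1]) hxne
  simp [PhiMat, A0mat, Bmat, Cmat, dotProduct, Fintype.sum_sum_type, Matrix.mulVec,
    Matrix.fromBlocks, Fin.sum_univ_two, Fin.sum_univ_one, Matrix.mul_apply,
    Matrix.transpose, Matrix.of_apply, Matrix.vecHead, Matrix.vecTail,
    Matrix.sub_apply, Matrix.add_apply, Matrix.smul_apply, hsym] at hψ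
  simp [Amat, Bvec, dotProduct, Matrix.mulVec, Fin.sum_univ_two, Fin.sum_univ_one,
    Matrix.vecHead, Matrix.vecTail, Matrix.of_apply, hsym]
  clear hΓ hφ hS hPhi hlam hle hne hxne hblock
  clear_value Γ φv
  ring_nf at hψ ⊢
  linarith [hψ, hτS]
end

section
/- Assume k_v + Γ > 0 and suppose there exist r_l ∈ (0, v_ref), λ ≥ λ_min(r_l), τ > 0, scalars τ₀, τ₁, τ₂, τ₃, τ₅ ≥ 0, τ₄ ∈ ℝ, and symmetric positive definite 2×2 real matrices P_g, P_l satisfying: (i) He(DᵀP_gF) − τ₀Π₀ − τ₁Π₁ − τ₂Π₂ − τ₃Π₃ ≺ 0, (ii) He(DᵀP_gF) − τ₀Π₀ − τ₅Π₁ − τ₄Π₄ ≺ 0, (iii) Φ ≺ 0, (iv) [[P_l, Cᵀ], [C, r_l²]] positive semidefinite, and (v) P_g − P_l positive semidefinite. Then {ε ∈ ℝ² : εᵀP_gε < 1} ⊆ {ε ∈ ℝ² : εᵀP_lε ≤ 1}, and every solution (ε₁, ε₂, f) of the error system converges to the origin: (ε₁(t), ε₂(t)) → (0, 0) as t → ∞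 (global asymptotic stability of the equilibrium). -/
open Matrix Real

/-- `He(M) = M + Mᵀ`. -/
def He {n : ℕ} (M : Matrix (Fin n) (Fin n) ℝ) : Matrix (Fin n) (Fin n) ℝ := M + Mᵀ

/-- Standard basis row vectors of `ℝ⁴`. -/
def e1 : Matrix (Fin 1) (Fin 4) ℝ := !![1, 0, 0, 0]
def e3 : Matrix (Fin 1) (Fin 4) ℝ := !![0, 0, 1, 0]
def e4 : Matrix (Fin 1) (Fin 4) ℝ := !![0, 0, 0, 1]

/-- The matrix `F = [I₂ 0 0] ∈ ℝ^{2×4}`. -/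
def Fmat : Matrix (Fin 2) (Fin 4) ℝ := !![1, 0, 0, 0; 0, 1, 0, 0]

/-- The matrix `D = [A  B  −F_nl(v_ref)·B] ∈ ℝ^{2×4}`. -/
noncomputable def Dmat (m g vs muC muS k kv vref : ℝ) : Matrix (Fin 2) (Fin 4) ℝ :=
  !![-kv / m, -k / m, -1 / m, Fnl m g vs muC muS vref / m; 1, 0, 0, 0]

/-- `Π₀ = e₄ᵀe₄ − FᵀP_gF`. -/
def Pi0 (Pg : Matrix (Fin 2) (Fin 2) ℝ) : Matrix (Fin 4) (Fin 4) ℝ :=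
  e4ᵀ * e4 - Fmatᵀ * Pg * Fmat

/-- `Π₁ = e₃ᵀe₃ − F_S²·e₄ᵀe₄` with `F_S = μ_S m g`. -/
def Pi1 (m g muS : ℝ) : Matrix (Fin 4) (Fin 4) ℝ :=
  e3ᵀ * e3 - ((muS * m * g) ^ 2) • (e4ᵀ * e4)

/-- `Π₂ = F_C²·e₄ᵀe₄ − e₃ᵀe₃` with `F_C = μ_C m g`. -/
def Pi2 (m g muC : ℝ) : Matrix (Fin 4) (Fin 4) ℝ :=
  ((muC * m * g) ^ 2) • (e4ᵀ * e4) - e3ᵀ * e3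

/-- `Π₃ = −He((e₁ + v_ref·e₄)ᵀe₃)`. -/
def Pi3 (vref : ℝ) : Matrix (Fin 4) (Fin 4) ℝ :=
  -He ((e1 + vref • e4)ᵀ * e3)

/-- `Π₄ = (e₁ + v_ref·e₄)ᵀ(e₁ + v_ref·e₄)`. -/
def Pi4 (vref : ℝ) : Matrix (Fin 4) (Fin 4) ℝ :=
  (e1 + vref • e4)ᵀ * (e1 + vref • e4)


open Matrix Real Filter Set Topology

lemma quad_deriv {u v : ℝ → ℝ} {du dv t : ℝ} (a b2 c : ℝ)
    (hu : HasDerivAt u du t) (hv : HasDerivAt v dv t) :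
    HasDerivAt (fun s => a*(u s)^2 + b2*(u s)*(v s) + c*(v s)^2)
      (2*a*(u t)*du + b2*(du*(v t) + (u t)*dv) + 2*c*(v t)*dv) t := by
  have h := ((hu.mul hu).const_mul a).add (((hu.mul hv).const_mul b2).add ((hv.mul hv).const_mul c))
  have heq : (fun s => a*(u s)^2 + b2*(u s)*(v s) + c*(v s)^2)
      = fun s => a*(u s*u s) + (b2*(u s*v s) + c*(v s*v s)) := by funext s; ring
  rw [heq]
  exact h.congr_deriv (by ring)

lemma coer {p q r : ℝ} (hp : 0 < p) (hd : q^2 < p*r) :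
    ∃ α, 0 < α ∧ ∀ x y : ℝ, α*(x^2+y^2) ≤ p*x^2 + 2*q*x*y + r*y^2 := by
  have hr : 0 < r := by nlinarith [sq_nonneg q]
  have hpr : 0 < p + r := by linarith
  refine ⟨(p*r - q^2)/(p+r), div_pos (by linarith) hpr, ?_⟩
  intro x y
  rw [div_mul_eq_mul_div, div_le_iff₀ (by positivity)]
  nlinarith [sq_nonneg (p*x + q*y), sq_nonneg (q*x + r*y)]

lemma decay_lemma {W dW : ℝ → ℝ} {t0 δ : ℝ}
    (hd : ∀ t, t0 ≤ t → HasDerivAt W (dW t) t)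
    (hB : ∀ t, t0 ≤ t → dW t ≤ -δ) :
    ∀ t, t0 ≤ t → W t ≤ W t0 - δ * (t - t0) := by
  intro t ht
  have hmono : AntitoneOn (fun s => W s + δ * s) (Set.Ici t0) := by
    apply antitoneOn_of_deriv_nonpos (convex_Ici t0)
    · intro s hs
      exact ((hd s hs).continuousAt.add (by fun_prop)).continuousWithinAt
    · intro s hs
      rw [interior_Ici] at hs
      exact ((hd s (le_of_lt hs)).add ((hasDerivAt_id s).const_mul δ)).differentiableAt.differentiableWithinAt
    · intro s hs
      rw [interior_Ici] at hs
      have h1 : HasDerivAt (fun s => W s + δ * s) (dW s + δ * 1) s :=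
        (hd s (le_of_lt hs)).add ((hasDerivAt_id s).const_mul δ)
      rw [h1.deriv]
      have := hB s (le_of_lt hs)
      linarith
  have := hmono (Set.self_mem_Ici) (show t ∈ Set.Ici t0 from ht) ht
  simp only at this
  linarith

lemma barrier_lemma {W dW : ℝ → ℝ} {t0 L : ℝ}
    (hd : ∀ t, t0 ≤ t → HasDerivAt W (dW t) t)
    (hneg : ∀ t, t0 ≤ t → W t = L → dW t < 0)
    (h0 : W t0 ≤ L) : ∀ t, t0 ≤ t → W t ≤ L := by
  intro t1 ht1
  by_contra hgt
  push_neg at hgt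
  set S : Set ℝ := Set.Icc t0 t1 ∩ W ⁻¹' (Set.Iic L) with hS
  have hWc : ContinuousOn W (Set.Icc t0 t1) :=
    fun s hs => ((hd s hs.1).continuousAt).continuousWithinAt
  have hSclosed : IsClosed S := hWc.preimage_isClosed_of_isClosed isClosed_Icc isClosed_Iic
  have hScomp : IsCompact S := isCompact_Icc.of_isClosed_subset hSclosed Set.inter_subset_left
  have hSne : S.Nonempty := ⟨t0, ⟨le_refl _, ht1⟩, h0⟩
  set s := sSup S with hs
  have hsmem : s ∈ S := hScomp.sSup_mem hSne
  have hst0 : t0 ≤ s := hsmem.1.1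
  have hst1 : s < t1 := lt_of_le_of_ne hsmem.1.2 (by
    intro h; rw [h] at hsmem; exact absurd hsmem.2 (not_le.2 hgt))
  have hbdd : BddAbove S := hScomp.bddAbove
  -- helper : any point in (s, t1] with W ≤ L gives contradiction
  have key : ∀ x, s < x → x ≤ t1 → W x ≤ L → False := by
    intro x hx hxt1 hWx
    have : x ∈ S := ⟨⟨le_trans hst0 (le_of_lt hx), hxt1⟩, hWx⟩
    exact absurd (le_csSup hbdd this) (not_le.2 hx)
  have hWsL : W s ≤ L := hsmem.2
  rcases lt_or_eq_of_le hWsL with hlt | heq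
  · -- W s < L : continuity gives a later point still ≤ L
    have hev : ∀ᶠ x in 𝓝 s, W x < L :=
      ((hd s hst0).continuousAt).eventually_mem (Iio_mem_nhds hlt)
    have hev2 : ∀ᶠ x in 𝓝[>] s, W x < L := hev.filter_mono nhdsWithin_le_nhds
    have hev3 : ∀ᶠ x in 𝓝[>] s, x < t1 := by
      have : Set.Ioo s t1 ∈ 𝓝[>] s := Ioo_mem_nhdsGT_of_mem ⟨le_refl s, hst1⟩
      exact Filter.eventually_of_mem this fun x hx => hx.2
    have hev4 : ∀ᶠ x in 𝓝[>] s, s < x :=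
      Filter.eventually_of_mem self_mem_nhdsWithin fun x hx => hx
    obtain ⟨x, ⟨hx1, hx2⟩, hx3⟩ := ((hev2.and hev3).and hev4).exists
    exact key x hx3 (le_of_lt hx2) (le_of_lt hx1)
  · -- W s = L, derivative negative
    have hneg' := hneg s hst0 heq
    have hslope := (hd s hst0)
    rw [hasDerivAt_iff_tendsto_slope] at hslope
    have hslope2 : Tendsto (slope W s) (𝓝[>] s) (𝓝 (dW s)) :=
      hslope.mono_left (nhdsWithin_mono _ fun x hx => ne_of_gt hx)
    have hev : ∀ᶠ x in 𝓝[>] s, slope W s x < 0 :=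
      hslope2.eventually_lt_const hneg'
    have hev3 : ∀ᶠ x in 𝓝[>] s, x < t1 := by
      have : Set.Ioo s t1 ∈ 𝓝[>] s := Ioo_mem_nhdsGT_of_mem ⟨le_refl s, hst1⟩
      exact Filter.eventually_of_mem this fun x hx => hx.2
    have hev4 : ∀ᶠ x in 𝓝[>] s, s < x :=
      Filter.eventually_of_mem self_mem_nhdsWithin fun x hx => hx
    obtain ⟨x, ⟨hx1, hx2⟩, hx3⟩ := ((hev.and hev3).and hev4).exists
    have hWx : W x < W s := by
      have hsl : slope W s x = (W x - W s) / (x - s) := by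
        rw [slope_def_field]
      rw [hsl] at hx1
      have hxs : 0 < x - s := by linarith
      rcases div_neg_iff.1 hx1 with ⟨ha, hb⟩ | ⟨ha, hb⟩
      · linarith
      · linarith
    exact key x hx3 (le_of_lt hx2) (by rw [heq] at hWx; exact le_of_lt hWx)

open Matrix Real Filter Set Topology

/-- smooth branch of the friction law -/
noncomputable def Fsf (m g vs muC muS : ℝ) (v : ℝ) : ℝ :=
  m*g*(muC + (muS - muC)*Real.exp (-(v^2)/vs^2))

lemma Fnl_pos (m g vs muC muS v : ℝ) (hv : 0 < v) :
    Fnl m g vs muC muS v = Fsf m g vs muC muS v := by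
  rw [Fnl, Fsf, Real.sign_of_pos hv, mul_one]

lemma Fsf_lb (m g vs muC muS : ℝ) (hm : 0 < m) (hg : 0 < g) (hmu : muC < muS) (v : ℝ) :
    muC*m*g < Fsf m g vs muC muS v := by
  have h1 : 0 < Real.exp (-(v^2)/vs^2) := Real.exp_pos _
  have key : 0 < m*g*((muS - muC)*Real.exp (-(v^2)/vs^2)) :=
    mul_pos (mul_pos hm hg) (mul_pos (sub_pos.2 hmu) h1)
  rw [Fsf]; nlinarith [key]

lemma Fsf_ub (m g vs muC muS : ℝ) (hm : 0 < m) (hg : 0 < g) (hvs : 0 < vs)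
    (hmu : muC < muS) (v : ℝ) :
    Fsf m g vs muC muS v ≤ muS*m*g := by
  have h1 : Real.exp (-(v^2)/vs^2) ≤ 1 := by
    apply Real.exp_le_one_iff.2
    apply div_nonpos_of_nonpos_of_nonneg (neg_nonpos.2 (by positivity)) (by positivity)
  have h2 : (muS - muC)*Real.exp (-(v^2)/vs^2) ≤ (muS - muC)*1 :=
    mul_le_mul_of_nonneg_left h1 (by linarith)
  have key : m*g*((muS - muC)*Real.exp (-(v^2)/vs^2)) ≤ m*g*((muS - muC)*1) :=
    mul_le_mul_of_nonneg_left h2 (le_of_lt (mul_pos hm hg))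
  rw [Fsf]; nlinarith [mul_pos hm hg]

lemma Fsf_pos (m g vs muC muS : ℝ) (hm : 0 < m) (hg : 0 < g) (hmuC : 0 < muC)
    (hmu : muC < muS) (v : ℝ) : 0 < Fsf m g vs muC muS v := by
  have := Fsf_lb m g vs muC muS hm hg hmu v
  nlinarith [mul_pos (mul_pos hm hg) hmuC]

lemma Fsf_anti (m g vs muC muS : ℝ) (hm : 0 < m) (hg : 0 < g) (hvs : 0 < vs)
    (hmu : muC < muS) {v1 v2 : ℝ} (h1 : 0 < v1) (h12 : v1 < v2) :
    Fsf m g vs muC muS v2 < Fsf m g vs muC muS v1 := by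
  have hvs2 : 0 < vs^2 := by positivity
  have hsq : v1^2 < v2^2 := by nlinarith
  have he : Real.exp (-(v2^2)/vs^2) < Real.exp (-(v1^2)/vs^2) := by
    apply Real.exp_lt_exp.2
    apply div_lt_div_of_pos_right (by linarith) hvs2
  have key := mul_pos (mul_pos hm hg) (sub_pos.2 hmu)
  rw [Fsf, Fsf]; nlinarith [key, he]

lemma Fnl_abs_le (m g vs muC muS : ℝ) (hm : 0 < m) (hg : 0 < g) (hvs : 0 < vs)
    (hmuC : 0 < muC) (hmu : muC < muS) (v : ℝ) :
    |Fnl m g vs muC muS v| ≤ muS*m*g := by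
  have hub := Fsf_ub m g vs muC muS hm hg hvs hmu v
  have hlb := Fsf_lb m g vs muC muS hm hg hmu v
  have hpos : 0 < muC*m*g := by positivity
  rcases lt_trichotomy v 0 with hv | hv | hv
  · rw [Fnl, Real.sign_of_neg hv]
    rw [show m * g * (muC + (muS - muC) * Real.exp (-v ^ 2 / vs ^ 2)) * (-1)
        = -(Fsf m g vs muC muS v) by rw [Fsf]; ring]
    rw [abs_neg, abs_of_pos (by linarith)]
    linarith
  · rw [hv, Fnl]
    simp [Real.sign_zero]
    nlinarith [mul_pos hm hg]
  · rw [Fnl_pos _ _ _ _ _ _ hv, abs_of_pos (by linarith)]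
    linarith

lemma Fsf_hasDeriv (m g vs muC muS vref : ℝ) :
    HasDerivAt (Fsf m g vs muC muS) (Gam m g vs muC muS vref) vref := by
  have h1 : HasDerivAt (fun v : ℝ => -(v^2)/vs^2) (-(2*vref)/vs^2) vref := by
    have := (hasDerivAt_pow 2 vref).neg.div_const (vs^2)
    refine this.congr_deriv ?_
    simp
  have h2 := ((h1.exp.const_mul (muS - muC)).const_add muC).const_mul (m*g)
  refine h2.congr_deriv ?_
  rw [Gam]; ring

lemma Fsf_cont (m g vs muC muS : ℝ) : Continuous (Fsf m g vs muC muS) := by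
  unfold Fsf; fun_prop

open Matrix Real Filter Set Topology

lemma phi_eq_phis (m g vs muC muS vref : ℝ) (hvref : 0 < vref) {x : ℝ} (hx : -vref < x) :
    phi m g vs muC muS vref x = Fsf m g vs muC muS (x+vref) - Fsf m g vs muC muS vref := by
  rw [phi, Fnl_pos _ _ _ _ _ _ (by linarith : (0:ℝ) < x + vref), Fnl_pos _ _ _ _ _ _ hvref]

lemma sector_bound (m g vs muC muS vref rl lam : ℝ)
    (hm : 0 < m) (hg : 0 < g) (hvs : 0 < vs) (hmu : muC < muS) (hvref : 0 < vref)
    (hrl : 0 < rl) (hrlv : rl < vref)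
    (hlam : lammin m g vs muC muS vref rl ≤ lam) :
    ∀ x : ℝ, |x| ≤ rl →
      (Fsf m g vs muC muS (x+vref) - Fsf m g vs muC muS vref) *
        ((Fsf m g vs muC muS (x+vref) - Fsf m g vs muC muS vref) + lam*x) ≤ 0 := by
  set Γ := Gam m g vs muC muS vref with hΓ
  set φ := fun x => Fsf m g vs muC muS (x+vref) - Fsf m g vs muC muS vref with hφ
  have hφ0 : φ 0 = 0 := by simp [hφ]
  have hφcont : Continuous φ := by
    rw [hφ]
    exact ((Fsf_cont m g vs muC muS).comp (by fun_prop)).sub continuous_const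
  have hφderiv : HasDerivAt φ Γ 0 := by
    have h1 : HasDerivAt (fun x : ℝ => x + vref) 1 0 := (hasDerivAt_id 0).add_const vref
    have h2 : HasDerivAt (Fsf m g vs muC muS) Γ (0 + vref) := by
      rw [zero_add]; exact Fsf_hasDeriv m g vs muC muS vref
    have := HasDerivAt.comp 0 h2 h1
    rw [hφ]
    simpa using this.sub_const (Fsf m g vs muC muS vref)
  -- continuous extension of -φ(s)/s
  set q : ℝ → ℝ := fun s => if s = 0 then -Γ else -(φ s)/s with hq
  have hqcont : ContinuousOn q (Set.Icc (-rl) rl) := by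
    intro s hs
    rcases eq_or_ne s 0 with h0 | h0
    · subst h0
      apply ContinuousAt.continuousWithinAt
      unfold ContinuousAt
      have hval : q 0 = -Γ := by simp [hq]
      rw [hval]
      rw [← nhdsNE_sup_pure (0:ℝ)]
      apply Filter.Tendsto.sup
      · have hslope : Tendsto (slope φ 0) (𝓝[≠] 0) (𝓝 Γ) :=
          hasDerivAt_iff_tendsto_slope.1 hφderiv
        have : Tendsto (fun s => -(slope φ 0 s)) (𝓝[≠] 0) (𝓝 (-Γ)) := hslope.neg
        apply Tendsto.congr' _ this
        filter_upwards [self_mem_nhdsWithin] with x hx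
        have hx0 : x ≠ 0 := hx
        simp only [hq, if_neg hx0, slope_def_field, hφ0]
        rw [sub_zero, sub_zero]
        ring
      · have : q 0 = -Γ := by simp [hq]
        rw [← this]
        exact tendsto_pure_nhds q 0
    · apply ContinuousAt.continuousWithinAt
      have hev : ∀ᶠ x in 𝓝 s, x ≠ 0 := isOpen_compl_singleton.eventually_mem h0
      have hc : ContinuousAt (fun x => -(φ x)/x) s :=
        ((hφcont.continuousAt).neg).div continuousAt_id h0
      apply hc.congr
      filter_upwards [hev] with x hx
      simp [hq, if_neg hx]
  have hbdd : BddAbove {y : ℝ | ∃ s ∈ Set.Icc (-rl) rl, s ≠ 0 ∧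
      y = -phi m g vs muC muS vref s / s} := by
    apply BddAbove.mono _ (isCompact_Icc.image_of_continuousOn hqcont).bddAbove
    rintro y ⟨s, hs, hs0, rfl⟩
    refine ⟨s, hs, ?_⟩
    have hsv : -vref < s := by
      have := hs.1; linarith
    rw [hq]; simp only [if_neg hs0]
    rw [phi_eq_phis m g vs muC muS vref hvref hsv]
  have hub : ∀ s : ℝ, |s| ≤ rl → s ≠ 0 → -(φ s)/s ≤ lam := by
    intro s hs hs0
    have hsv : -vref < s := by
      have := abs_le.1 hs; linarith [this.1]
    have hmem : -(φ s)/s ∈ {y : ℝ | ∃ s ∈ Set.Icc (-rl) rl, s ≠ 0 ∧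
        y = -phi m g vs muC muS vref s / s} := by
      refine ⟨s, abs_le.1 hs, hs0, ?_⟩
      rw [phi_eq_phis m g vs muC muS vref hvref hsv, hφ]
    exact le_trans (le_csSup hbdd hmem) hlam
  -- sign of φ
  intro x hx
  have hxr := abs_le.1 hx
  rcases lt_trichotomy x 0 with hneg | h0 | hpos
  · have hφpos : 0 < φ x := by
      rw [hφ]
      have : 0 < x + vref := by linarith [hxr.1]
      have := Fsf_anti m g vs muC muS hm hg hvs hmu this (by linarith : x + vref < vref)
      simp only []
      linarith
    have hlin : φ x + lam*x ≤ 0 := by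
      have := hub x hx (ne_of_lt hneg)
      rw [div_le_iff_of_neg hneg] at this
      linarith
    exact mul_nonpos_of_nonneg_of_nonpos (le_of_lt hφpos) hlin
  · subst h0; norm_num
  · have hφneg : φ x < 0 := by
      rw [hφ]
      have := Fsf_anti m g vs muC muS hm hg hvs hmu hvref (by linarith : vref < x + vref)
      simp only []
      linarith
    have hlin : 0 ≤ φ x + lam*x := by
      have := hub x hx (ne_of_gt hpos)
      rw [div_le_iff₀ hpos] at this
      linarith
    exact mul_nonpos_of_nonpos_of_nonneg (le_of_lt hφneg) hlin

open Matrix Real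

lemma quad2_eval (P : Matrix (Fin 2) (Fin 2) ℝ) (x y : ℝ) :
    (![x,y] : Fin 2 → ℝ) ⬝ᵥ P.mulVec ![x,y]
    = P 0 0*x^2 + (P 0 1 + P 1 0)*(x*y) + P 1 1*y^2 := by
  simp [Matrix.mulVec, dotProduct, Fin.sum_univ_succ]
  ring

lemma LMI1_eval (m g vs muC muS k kv vref τ0 τ1 τ2 τ3 : ℝ)
    (Pg : Matrix (Fin 2) (Fin 2) ℝ) (hsym : Pg 1 0 = Pg 0 1) (x y u w : ℝ) :
    (![x,y,u,w] : Fin 4 → ℝ) ⬝ᵥ ((He ((Dmat m g vs muC muS k kv vref)ᵀ * Pg * Fmat)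
      - τ0 • Pi0 Pg - τ1 • Pi1 m g muS - τ2 • Pi2 m g muC - τ3 • Pi3 vref)).mulVec ![x,y,u,w]
    = 2*((-kv/m*x - k/m*y - u/m + Fnl m g vs muC muS vref/m*w) * (Pg 0 0*x + Pg 0 1*y)
         + x*(Pg 0 1*x + Pg 1 1*y))
      - τ0*(w^2 - (Pg 0 0*x^2 + 2*Pg 0 1*(x*y) + Pg 1 1*y^2))
      - τ1*(u^2 - (muS*m*g)^2*w^2)
      - τ2*((muC*m*g)^2*w^2 - u^2)
      - τ3*(-2*(x+vref*w)*u) := by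
  simp [He, Dmat, Fmat, Pi0, Pi1, Pi2, Pi3, e1, e3, e4, Matrix.mulVec, dotProduct,
    Matrix.mul_apply, Fin.sum_univ_succ, Matrix.transpose_apply, Matrix.sub_apply,
    Matrix.smul_apply, hsym]
  ring

lemma LMI2_eval (m g vs muC muS k kv vref τ0 τ5 τ4 : ℝ)
    (Pg : Matrix (Fin 2) (Fin 2) ℝ) (hsym : Pg 1 0 = Pg 0 1) (x y u w : ℝ) :
    (![x,y,u,w] : Fin 4 → ℝ) ⬝ᵥ ((He ((Dmat m g vs muC muS k kv vref)ᵀ * Pg * Fmat)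
      - τ0 • Pi0 Pg - τ5 • Pi1 m g muS - τ4 • Pi4 vref)).mulVec ![x,y,u,w]
    = 2*((-kv/m*x - k/m*y - u/m + Fnl m g vs muC muS vref/m*w) * (Pg 0 0*x + Pg 0 1*y)
         + x*(Pg 0 1*x + Pg 1 1*y))
      - τ0*(w^2 - (Pg 0 0*x^2 + 2*Pg 0 1*(x*y) + Pg 1 1*y^2))
      - τ5*(u^2 - (muS*m*g)^2*w^2)
      - τ4*(x+vref*w)^2 := by
  simp [He, Dmat, Fmat, Pi0, Pi1, Pi4, e1, e3, e4, Matrix.mulVec, dotProduct,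
    Matrix.mul_apply, Fin.sum_univ_succ, Matrix.transpose_apply, Matrix.sub_apply,
    Matrix.smul_apply, hsym]
  ring

lemma Phi_eval (m k kv Γ lam τ x y w : ℝ) (Pl : Matrix (Fin 2) (Fin 2) ℝ)
    (hsym : Pl 1 0 = Pl 0 1) :
    (Sum.elim ![x,y] ![w]) ⬝ᵥ (PhiMat m k kv Γ lam τ Pl).mulVec (Sum.elim ![x,y] ![w])
    = 2*((-(kv+Γ)/m*x - k/m*y) * (Pl 0 0 * x + Pl 0 1 * y) + x * (Pl 0 1 * x + Pl 1 1 * y))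
      - 2*τ*Γ*(Γ+lam)*x^2
      - (2*w/m)*(Pl 0 0*x + Pl 0 1*y)
      - 2*τ*(2*Γ+lam)*x*w - 2*τ*w^2 := by
  simp [PhiMat, A0mat, Bmat, Cmat, Matrix.mulVec, dotProduct, Matrix.mul_apply,
    Fintype.sum_sum_type, Fin.sum_univ_succ, Matrix.fromBlocks, Matrix.transpose_apply, hsym]
  ring

lemma block_eval (rl x y z : ℝ) (Pl : Matrix (Fin 2) (Fin 2) ℝ) (hsym : Pl 1 0 = Pl 0 1) :
    (Sum.elim ![x,y] ![z]) ⬝ᵥ (Matrix.fromBlocks Pl Cmatᵀ Cmat !![rl ^ 2]).mulVec (Sum.elim ![x,y] ![z])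
    = (Pl 0 0*x^2 + 2*Pl 0 1*(x*y) + Pl 1 1*y^2) + 2*x*z + rl^2*z^2 := by
  simp [Cmat, Matrix.mulVec, dotProduct, Matrix.mul_apply,
    Fintype.sum_sum_type, Fin.sum_univ_succ, Matrix.fromBlocks, Matrix.transpose_apply, hsym]
  ring

open Matrix Real Filter Set Topology
set_option maxHeartbeats 1000000

/-- quadratic-form derivative value along the global dynamics -/
noncomputable def gaux (m k kv Fst a b c : ℝ) (z : ℝ × ℝ × ℝ) : ℝ :=
  2*a*z.1*(-(1/m)*(z.2.2 - Fst) - kv/m*z.1 - k/m*z.2.1)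
  + 2*b*((-(1/m)*(z.2.2 - Fst) - kv/m*z.1 - k/m*z.2.1)*z.2.1 + z.1*z.1)
  + 2*c*z.2.1*z.1

/-- quadratic-form derivative value along the local (slipping) dynamics -/
noncomputable def haux (m g vs muC muS vref k kv p q r : ℝ) (z : ℝ × ℝ) : ℝ :=
  2*p*z.1*(-(1/m)*(Fsf m g vs muC muS (z.1+vref) - Fsf m g vs muC muS vref) - kv/m*z.1 - k/m*z.2)
  + 2*q*((-(1/m)*(Fsf m g vs muC muS (z.1+vref) - Fsf m g vs muC muS vref) - kv/m*z.1 - k/m*z.2)*z.2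
      + z.1*z.1)
  + 2*r*z.2*z.1

lemma haux_cont (m g vs muC muS vref k kv p q r : ℝ) :
    Continuous (haux m g vs muC muS vref k kv p q r) := by
  unfold haux
  have h1 : Continuous (fun z : ℝ × ℝ => Fsf m g vs muC muS (z.1+vref)) :=
    (Fsf_cont m g vs muC muS).comp (by fun_prop)
  fun_prop

lemma gaux_cont (m k kv Fst a b c : ℝ) : Continuous (gaux m k kv Fst a b c) := by
  unfold gaux; fun_prop

lemma claimG (m g vs k kv muC muS vref : ℝ)
    (hm : 0 < m) (hg : 0 < g) (hvs : 0 < vs) (hmuC : 0 < muC) (hmu : muC < muS)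
    (hvref : 0 < vref)
    (τ0 τ1 τ2 τ3 τ5 : ℝ) (τ4 : ℝ)
    (hτ0 : 0 ≤ τ0) (hτ1 : 0 ≤ τ1) (hτ2 : 0 ≤ τ2) (hτ3 : 0 ≤ τ3) (hτ5 : 0 ≤ τ5)
    (Pg : Matrix (Fin 2) (Fin 2) ℝ) (hsym : Pg 1 0 = Pg 0 1)
    (hLMI1 : NegDef (He ((Dmat m g vs muC muS k kv vref)ᵀ * Pg * Fmat)
      - τ0 • Pi0 Pg - τ1 • Pi1 m g muS - τ2 • Pi2 m g muC - τ3 • Pi3 vref))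
    (hLMI2 : NegDef (He ((Dmat m g vs muC muS k kv vref)ᵀ * Pg * Fmat)
      - τ0 • Pi0 Pg - τ5 • Pi1 m g muS - τ4 • Pi4 vref)) :
    ∀ x y u : ℝ, u*(x+vref) = |x+vref| * Fsf m g vs muC muS (x+vref) → |u| ≤ muS*m*g →
      1 ≤ Pg 0 0*x^2 + 2*Pg 0 1*x*y + Pg 1 1*y^2 →
      gaux m k kv (Fnl m g vs muC muS vref) (Pg 0 0) (Pg 0 1) (Pg 1 1) (x,y,u) < 0 := by
  intro x y u hgr habs hVg
  have hX : (![x,y,u,1] : Fin 4 → ℝ) ≠ 0 := by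
    intro h; have := congrFun h 3; simp at this
  have hid : gaux m k kv (Fnl m g vs muC muS vref) (Pg 0 0) (Pg 0 1) (Pg 1 1) (x,y,u)
      = 2*((-kv/m*x - k/m*y - u/m + Fnl m g vs muC muS vref/m*1) * (Pg 0 0*x + Pg 0 1*y)
         + x*(Pg 0 1*x + Pg 1 1*y)) := by
    simp only [gaux]; ring
  have hu2 : u^2 ≤ (muS*m*g)^2 := by
    nlinarith [abs_le.1 habs, abs_nonneg u, sq_abs u]
  have h0 : τ0*(1^2 - (Pg 0 0*x^2 + 2*Pg 0 1*(x*y) + Pg 1 1*y^2)) ≤ 0 :=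
    mul_nonpos_of_nonneg_of_nonpos hτ0 (by nlinarith [hVg])
  by_cases hv : x + vref = 0
  · have h5 : τ5*(u^2 - (muS*m*g)^2*1^2) ≤ 0 :=
      mul_nonpos_of_nonneg_of_nonpos hτ5 (by nlinarith [hu2])
    have h4 : τ4*(x+vref*1)^2 = 0 := by
      rw [show x + vref*1 = 0 by rw [mul_one]; exact hv]; ring
    have h := hLMI2 ![x,y,u,1] hX
    rw [LMI2_eval m g vs muC muS k kv vref τ0 τ5 τ4 Pg hsym x y u 1] at h
    linarith [h, h0, h5, h4, hid.le, hid.ge]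
  · -- slipping: u = ± Fsf
    have hFpos : 0 < Fsf m g vs muC muS (x+vref) := Fsf_pos m g vs muC muS hm hg hmuC hmu _
    have hvne : |x+vref| ≠ 0 := fun hc => hv (abs_eq_zero.1 hc)
    have huabs : |u| = Fsf m g vs muC muS (x+vref) := by
      have h1 : |u| * |x+vref| = |x+vref| * Fsf m g vs muC muS (x+vref) := by
        rw [← abs_mul, hgr, abs_mul, abs_abs,
          abs_of_pos hFpos]
      have := mul_left_cancel₀ hvne (by linarith [h1] : |x+vref| * |u|
        = |x+vref| * Fsf m g vs muC muS (x+vref))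
      exact this
    have hu2 : u^2 = (Fsf m g vs muC muS (x+vref))^2 := by
      rw [← sq_abs, huabs]
    have hub := Fsf_ub m g vs muC muS hm hg hvs hmu (x+vref)
    have hlb := Fsf_lb m g vs muC muS hm hg hmu (x+vref)
    have h1' : τ1*(u^2 - (muS*m*g)^2*1^2) ≤ 0 :=
      mul_nonpos_of_nonneg_of_nonpos hτ1 (by nlinarith)
    have h2' : τ2*((muC*m*g)^2*1^2 - u^2) ≤ 0 :=
      mul_nonpos_of_nonneg_of_nonpos hτ2 (by nlinarith [mul_pos (mul_pos hmuC hm) hg])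
    have h3' : τ3*(-2*(x+vref*1)*u) ≤ 0 := by
      apply mul_nonpos_of_nonneg_of_nonpos hτ3
      have huv : 0 ≤ u*(x+vref) := by
        rw [hgr]; positivity
      nlinarith [huv]
    have h := hLMI1 ![x,y,u,1] hX
    rw [LMI1_eval m g vs muC muS k kv vref τ0 τ1 τ2 τ3 Pg hsym x y u 1] at h
    linarith [h, h0, h1', h2', h3', hid.le, hid.ge]

lemma claimL (m g vs k kv muC muS vref rl lam τ : ℝ)
    (hm : 0 < m) (hg : 0 < g) (hvs : 0 < vs) (hmuC : 0 < muC) (hmu : muC < muS)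
    (hvref : 0 < vref) (hrl : 0 < rl) (hrlv : rl < vref) (hτ : 0 < τ)
    (hlam : lammin m g vs muC muS vref rl ≤ lam)
    (Pl : Matrix (Fin 2) (Fin 2) ℝ) (hsym : Pl 1 0 = Pl 0 1)
    (hPhi : NegDef (PhiMat m k kv (Gam m g vs muC muS vref) lam τ Pl)) :
    ∀ x y : ℝ, ¬(x = 0 ∧ y = 0) → x^2 ≤ rl^2 →
      haux m g vs muC muS vref k kv (Pl 0 0) (Pl 0 1) (Pl 1 1) (x,y) < 0 := by
  intro x y hnz hx2
  have hX : (Sum.elim ![x,y] ![(Fsf m g vs muC muS (x+vref) - Fsf m g vs muC muS vref)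
      - Gam m g vs muC muS vref * x] : Fin 2 ⊕ Fin 1 → ℝ) ≠ 0 := by
    intro h
    have h1 := congrFun h (Sum.inl 0)
    have h2 := congrFun h (Sum.inl 1)
    simp at h1 h2
    exact hnz ⟨h1, h2⟩
  have h := hPhi _ hX
  rw [Phi_eval m k kv (Gam m g vs muC muS vref) lam τ x y
    ((Fsf m g vs muC muS (x+vref) - Fsf m g vs muC muS vref) - Gam m g vs muC muS vref * x)
    Pl hsym] at h
  have habs : |x| ≤ rl := abs_le.2 ⟨by nlinarith, by nlinarith⟩
  have hsec := sector_bound m g vs muC muS vref rl lam hm hg hvs hmu hvref hrl hrlv hlam x habs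
  have hprod : 2*τ*((Fsf m g vs muC muS (x+vref) - Fsf m g vs muC muS vref) *
      ((Fsf m g vs muC muS (x+vref) - Fsf m g vs muC muS vref) + lam*x)) ≤ 0 :=
    mul_nonpos_of_nonneg_of_nonpos (by linarith) hsec
  have hid : haux m g vs muC muS vref k kv (Pl 0 0) (Pl 0 1) (Pl 1 1) (x,y)
      = (2*((-(kv+Gam m g vs muC muS vref)/m*x - k/m*y) * (Pl 0 0 * x + Pl 0 1 * y)
            + x * (Pl 0 1 * x + Pl 1 1 * y))
        - 2*τ*(Gam m g vs muC muS vref)*((Gam m g vs muC muS vref)+lam)*x^2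
        - (2*((Fsf m g vs muC muS (x+vref) - Fsf m g vs muC muS vref)
            - Gam m g vs muC muS vref * x)/m)*(Pl 0 0*x + Pl 0 1*y)
        - 2*τ*(2*(Gam m g vs muC muS vref)+lam)*x*((Fsf m g vs muC muS (x+vref)
            - Fsf m g vs muC muS vref) - Gam m g vs muC muS vref * x)
        - 2*τ*((Fsf m g vs muC muS (x+vref) - Fsf m g vs muC muS vref)
            - Gam m g vs muC muS vref * x)^2)
        + 2*τ*((Fsf m g vs muC muS (x+vref) - Fsf m g vs muC muS vref) *
          ((Fsf m g vs muC muS (x+vref) - Fsf m g vs muC muS vref) + lam*x)) := by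
    simp only [haux]; ring
  linarith [h, hprod, hid.le, hid.ge]

open Matrix Real Filter Set Topology
set_option maxHeartbeats 1600000

/-- helper : `x² ≤ S` implies `|x| ≤ max 1 S` -/
lemma abs_le_max_one {x S : ℝ} (h : x^2 ≤ S) : |x| ≤ max 1 S := by
  rcases le_or_gt |x| 1 with h1 | h1
  · exact le_max_of_le_left h1
  · have h2 : |x| ≤ |x|^2 := by nlinarith [abs_nonneg x]
    rw [sq_abs] at h2
    exact le_max_of_le_right (le_trans h2 h)

lemma my_abs_lt_of_sq_lt {x η : ℝ} (h : x^2 < η^2) (hη : 0 < η) : |x| < η := by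
  rw [← sq_abs] at h; nlinarith [abs_nonneg x]

theorem stmt19 (m g vs k kv muC muS vref : ℝ)
    (hm : 0 < m) (hg : 0 < g) (hvs : 0 < vs) (hk : 0 < k) (hkv : 0 < kv)
    (hmuC : 0 < muC) (hmu : muC < muS) (hvref : 0 < vref)
    (hHurwitz : 0 < kv + Gam m g vs muC muS vref)
    (rl : ℝ) (hrl : 0 < rl) (hrlv : rl < vref)
    (lam : ℝ) (hlam : lammin m g vs muC muS vref rl ≤ lam)
    (τ : ℝ) (hτ : 0 < τ)
    (τ0 τ1 τ2 τ3 τ5 : ℝ) (τ4 : ℝ)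
    (hτ0 : 0 ≤ τ0) (hτ1 : 0 ≤ τ1) (hτ2 : 0 ≤ τ2) (hτ3 : 0 ≤ τ3) (hτ5 : 0 ≤ τ5)
    (Pg Pl : Matrix (Fin 2) (Fin 2) ℝ) (hPg : Pg.PosDef) (hPl : Pl.PosDef)
    (hLMI1 : NegDef (He ((Dmat m g vs muC muS k kv vref)ᵀ * Pg * Fmat)
      - τ0 • Pi0 Pg - τ1 • Pi1 m g muS - τ2 • Pi2 m g muC - τ3 • Pi3 vref))
    (hLMI2 : NegDef (He ((Dmat m g vs muC muS k kv vref)ᵀ * Pg * Fmat)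
      - τ0 • Pi0 Pg - τ5 • Pi1 m g muS - τ4 • Pi4 vref))
    (hPhi : NegDef (PhiMat m k kv (Gam m g vs muC muS vref) lam τ Pl))
    (hblock : (Matrix.fromBlocks Pl Cmatᵀ Cmat !![rl ^ 2]).PosSemidef)
    (hincl : (Pg - Pl).PosSemidef) :
    {ε : Fin 2 → ℝ | ε ⬝ᵥ Pg.mulVec ε < 1} ⊆ {ε : Fin 2 → ℝ | ε ⬝ᵥ Pl.mulVec ε ≤ 1} ∧
    ∀ ε1 ε2 f : ℝ → ℝ,
      (∀ t : ℝ, 0 ≤ t →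
        f t ∈ Ffric m g vs muC muS (ε1 t + vref) ∧
        HasDerivAt ε1
          (-(1 / m) * (f t - Fnl m g vs muC muS vref) - (kv / m) * ε1 t - (k / m) * ε2 t) t ∧
        HasDerivAt ε2 (ε1 t) t) →
      Filter.Tendsto (fun t => (ε1 t, ε2 t)) Filter.atTop (nhds (0, 0)) := by
  have hmg : 0 < m*g := mul_pos hm hg
  have hsymg : Pg 1 0 = Pg 0 1 := by simpa using hPg.1.apply 0 1
  have hsyml : Pl 1 0 = Pl 0 1 := by simpa using hPl.1.apply 0 1
  have hFst : Fnl m g vs muC muS vref = Fsf m g vs muC muS vref :=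
    Fnl_pos m g vs muC muS vref hvref
  -- scalar positive definiteness
  have hquadg : ∀ x y : ℝ, ¬(x = 0 ∧ y = 0) →
      0 < Pg 0 0*x^2 + 2*Pg 0 1*x*y + Pg 1 1*y^2 := by
    intro x y hnz
    have hvne : (![x,y] : Fin 2 → ℝ) ≠ 0 := by
      intro h
      have h0 := congrFun h 0; have h1 := congrFun h 1
      simp at h0 h1
      exact hnz ⟨h0, h1⟩
    have h2 := hPg.dotProduct_mulVec_pos hvne
    simp only [star_trivial] at h2
    rw [quad2_eval] at h2
    rw [hsymg] at h2
    linarith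
  have hquadl : ∀ x y : ℝ, ¬(x = 0 ∧ y = 0) →
      0 < Pl 0 0*x^2 + 2*Pl 0 1*x*y + Pl 1 1*y^2 := by
    intro x y hnz
    have hvne : (![x,y] : Fin 2 → ℝ) ≠ 0 := by
      intro h
      have h0 := congrFun h 0; have h1 := congrFun h 1
      simp at h0 h1
      exact hnz ⟨h0, h1⟩
    have h2 := hPl.dotProduct_mulVec_pos hvne
    simp only [star_trivial] at h2
    rw [quad2_eval] at h2
    rw [hsyml] at h2
    linarith
  have hag : 0 < Pg 0 0 := by have := hquadg 1 0 (by simp); linarith [this]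
  have hal : 0 < Pl 0 0 := by have := hquadl 1 0 (by simp); linarith [this]
  have hdetg : Pg 0 1^2 < Pg 0 0*Pg 1 1 := by
    have h := hquadg (Pg 0 1) (-(Pg 0 0)) (by rintro ⟨-, h2⟩; linarith)
    nlinarith [h, hag]
  have hdetl : Pl 0 1^2 < Pl 0 0*Pl 1 1 := by
    have h := hquadl (Pl 0 1) (-(Pl 0 0)) (by rintro ⟨-, h2⟩; linarith)
    nlinarith [h, hal]
  obtain ⟨αg, hαg0, hαg⟩ := coer hag hdetg
  obtain ⟨αl, hαl0, hαl⟩ := coer hal hdetl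
  -- Vl ≤ Vg
  have hVleVg : ∀ x y : ℝ, Pl 0 0*x^2 + 2*Pl 0 1*x*y + Pl 1 1*y^2
      ≤ Pg 0 0*x^2 + 2*Pg 0 1*x*y + Pg 1 1*y^2 := by
    intro x y
    have h := hincl.dotProduct_mulVec_nonneg ![x,y]
    simp only [star_trivial] at h
    rw [quad2_eval] at h
    simp only [Matrix.sub_apply] at h
    rw [hsymg, hsyml] at h
    nlinarith [h]
  -- block LMI : x² ≤ rl² on the sublevel set of Vl
  have hx2rl : ∀ x y : ℝ, Pl 0 0*x^2 + 2*Pl 0 1*x*y + Pl 1 1*y^2 ≤ 1 → x^2 ≤ rl^2 := by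
    intro x y hle
    have h := hblock.dotProduct_mulVec_nonneg (Sum.elim ![x,y] ![-(x/rl^2)])
    simp only [star_trivial] at h
    rw [block_eval rl x y (-(x/rl^2)) Pl hsyml] at h
    have hrl2 : (0:ℝ) < rl^2 := by positivity
    have hfe : Pl 0 0*x^2 + 2*Pl 0 1*(x*y) + Pl 1 1*y^2 ≥ x^2/rl^2 := by
      have hc : 2*x*(-(x/rl^2)) + rl^2*(-(x/rl^2))^2 = -(x^2/rl^2) := by
        field_simp; ring
      nlinarith [h, hc]
    rw [ge_iff_le, div_le_iff₀ hrl2] at hfe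
    nlinarith [hfe, hle, hrl2]
  constructor
  · -- inclusion of sublevel sets
    intro ε hε
    simp only [Set.mem_setOf_eq] at *
    have h := hincl.dotProduct_mulVec_nonneg ε
    simp only [star_trivial, Matrix.sub_mulVec, dotProduct_sub] at h
    linarith
  -- now the convergence statement
  intro ε1 ε2 f hsol
  -- friction facts
  have hfr : ∀ t, 0 ≤ t → |f t| ≤ muS*m*g ∧
      (f t)*(ε1 t + vref) = |ε1 t + vref| * Fsf m g vs muC muS (ε1 t + vref) := by
    intro t ht
    obtain ⟨hf, -, -⟩ := hsol t ht
    by_cases hv : ε1 t + vref = 0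
    · rw [Ffric, if_pos hv] at hf
      refine ⟨abs_le.2 ⟨hf.1, hf.2⟩, ?_⟩
      rw [hv]; simp
    · rw [Ffric, if_neg hv, Set.mem_singleton_iff] at hf
      constructor
      · rw [hf]; exact Fnl_abs_le m g vs muC muS hm hg hvs hmuC hmu _
      · rw [hf]
        rcases lt_or_gt_of_ne hv with hvneg | hvpos
        · rw [Fnl, Real.sign_of_neg hvneg, abs_of_neg hvneg, Fsf]
          ring
        · rw [Fnl_pos m g vs muC muS _ hvpos, abs_of_pos hvpos]
          ring
  -- the global Lyapunov function along the trajectory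
  set Wg : ℝ → ℝ :=
    fun t => Pg 0 0*(ε1 t)^2 + 2*Pg 0 1*(ε1 t)*(ε2 t) + Pg 1 1*(ε2 t)^2 with hWgdef
  have hdWg : ∀ t, 0 ≤ t → HasDerivAt Wg
      (gaux m k kv (Fnl m g vs muC muS vref) (Pg 0 0) (Pg 0 1) (Pg 1 1) (ε1 t, ε2 t, f t)) t := by
    intro t ht
    obtain ⟨-, h1, h2⟩ := hsol t ht
    have hd := quad_deriv (Pg 0 0) (2*Pg 0 1) (Pg 1 1) h1 h2
    have hval : gaux m k kv (Fnl m g vs muC muS vref) (Pg 0 0) (Pg 0 1) (Pg 1 1)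
        (ε1 t, ε2 t, f t)
        = 2*(Pg 0 0)*(ε1 t)*(-(1 / m) * (f t - Fnl m g vs muC muS vref)
            - (kv / m) * ε1 t - (k / m) * ε2 t)
          + 2*Pg 0 1*((-(1 / m) * (f t - Fnl m g vs muC muS vref)
            - (kv / m) * ε1 t - (k / m) * ε2 t)*(ε2 t) + (ε1 t)*(ε1 t))
          + 2*(Pg 1 1)*(ε2 t)*(ε1 t) := by
      simp only [gaux]
    rw [hval]
    exact hd
  have hgneg : ∀ t, 0 ≤ t → 1 ≤ Wg t →
      gaux m k kv (Fnl m g vs muC muS vref) (Pg 0 0) (Pg 0 1) (Pg 1 1) (ε1 t, ε2 t, f t) < 0 := by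
    intro t ht h1
    exact claimG m g vs k kv muC muS vref hm hg hvs hmuC hmu hvref τ0 τ1 τ2 τ3 τ5 τ4
      hτ0 hτ1 hτ2 hτ3 hτ5 Pg hsymg hLMI1 hLMI2 (ε1 t) (ε2 t) (f t)
      (hfr t ht).2 (hfr t ht).1 h1
  -- Phase 1 : reach the sublevel set {Wg ≤ 1}
  have phaseG : ∃ T, 0 ≤ T ∧ ∀ t, T ≤ t → Wg t ≤ 1 := by
    by_cases hex : ∃ s, 0 ≤ s ∧ Wg s ≤ 1
    · obtain ⟨T, hT0, hT1⟩ := hex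
      exact ⟨T, hT0, barrier_lemma (fun t ht => hdWg t (le_trans hT0 ht))
        (fun t ht heq => hgneg t (le_trans hT0 ht) (le_of_eq heq.symm)) hT1⟩
    · exfalso
      push_neg at hex
      have hC1 : 1 < Wg 0 := hex 0 le_rfl
      have hbound : ∀ t, 0 ≤ t → Wg t ≤ Wg 0 :=
        barrier_lemma hdWg (fun t ht heq => hgneg t ht (by rw [heq]; linarith)) le_rfl
      set Qg : ℝ×ℝ×ℝ → ℝ :=
        fun z => Pg 0 0*z.1^2 + 2*Pg 0 1*z.1*z.2.1 + Pg 1 1*z.2.1^2 with hQgdef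
      set Gf : ℝ×ℝ×ℝ → ℝ :=
        fun z => z.2.2*(z.1+vref) - |z.1+vref| * Fsf m g vs muC muS (z.1+vref) with hGfdef
      have hQgc : Continuous Qg := by rw [hQgdef]; fun_prop
      have hGfc : Continuous Gf := by
        rw [hGfdef]
        apply Continuous.sub (by fun_prop)
        exact (continuous_abs.comp (by fun_prop)).mul
          ((Fsf_cont m g vs muC muS).comp (by fun_prop))
      set K : Set (ℝ×ℝ×ℝ) := Qg⁻¹' (Set.Icc 1 (Wg 0)) ∩
        ((fun z : ℝ×ℝ×ℝ => |z.2.2|) ⁻¹' (Set.Iic (muS*m*g)) ∩ Gf ⁻¹' {0}) with hKdef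
      have hKclosed : IsClosed K :=
        (isClosed_Icc.preimage hQgc).inter
          ((isClosed_Iic.preimage (continuous_abs.comp (by fun_prop))).inter
            (isClosed_singleton.preimage hGfc))
      have hKbdd : Bornology.IsBounded K := by
        rw [Metric.isBounded_iff_subset_closedBall 0]
        refine ⟨max 1 (Wg 0/αg) + muS*m*g, ?_⟩
        intro z hz
        obtain ⟨hz1, hz2, -⟩ := hz
        simp only [Set.mem_preimage, Set.mem_Icc] at hz1
        simp only [Set.mem_preimage, Set.mem_Iic] at hz2
        have hco := hαg z.1 z.2.1
        have hzx : z.1^2 ≤ Wg 0/αg := by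
          rw [le_div_iff₀ hαg0]
          have : Qg z = Pg 0 0*z.1^2 + 2*Pg 0 1*z.1*z.2.1 + Pg 1 1*z.2.1^2 := by rw [hQgdef]
          nlinarith [hz1.2, hco, sq_nonneg z.2.1, this]
        have hzy : z.2.1^2 ≤ Wg 0/αg := by
          rw [le_div_iff₀ hαg0]
          have : Qg z = Pg 0 0*z.1^2 + 2*Pg 0 1*z.1*z.2.1 + Pg 1 1*z.2.1^2 := by rw [hQgdef]
          nlinarith [hz1.2, hco, sq_nonneg z.1, this]
        have hb1 := abs_le_max_one hzx
        have hb2 := abs_le_max_one hzy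
        have hmuS : 0 ≤ muS*m*g := by nlinarith
        rw [Metric.mem_closedBall, dist_zero_right, Prod.norm_def, Prod.norm_def]
        simp only [Real.norm_eq_abs]
        apply max_le (by linarith)
        apply max_le (by linarith)
        linarith [hz2, le_max_left (1:ℝ) (Wg 0/αg)]
      have hKcomp : IsCompact K := Metric.isCompact_of_isClosed_isBounded hKclosed hKbdd
      have hmemK : ∀ t, 0 ≤ t → (ε1 t, ε2 t, f t) ∈ K := by
        intro t ht
        refine ⟨⟨le_of_lt (hex t ht), hbound t ht⟩, (hfr t ht).1, ?_⟩
        show Gf (ε1 t, ε2 t, f t) ∈ ({0} : Set ℝ)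
        rw [Set.mem_singleton_iff, hGfdef]
        show f t * (ε1 t + vref) - |ε1 t + vref| * Fsf m g vs muC muS (ε1 t + vref) = 0
        rw [sub_eq_zero]
        exact (hfr t ht).2
      have hKne : K.Nonempty := ⟨(ε1 0, ε2 0, f 0), hmemK 0 le_rfl⟩
      obtain ⟨z0, hz0K, hz0max⟩ := hKcomp.exists_isMaxOn hKne
        ((gaux_cont m k kv (Fnl m g vs muC muS vref) (Pg 0 0) (Pg 0 1) (Pg 1 1)).continuousOn)
      have hδ : gaux m k kv (Fnl m g vs muC muS vref) (Pg 0 0) (Pg 0 1) (Pg 1 1) z0 < 0 := by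
        obtain ⟨hz1, hz2, hz3⟩ := hz0K
        simp only [Set.mem_preimage, Set.mem_Icc] at hz1
        simp only [Set.mem_preimage, Set.mem_Iic] at hz2
        simp only [Set.mem_preimage, Set.mem_singleton_iff, hGfdef] at hz3
        exact claimG m g vs k kv muC muS vref hm hg hvs hmuC hmu hvref τ0 τ1 τ2 τ3 τ5 τ4
          hτ0 hτ1 hτ2 hτ3 hτ5 Pg hsymg hLMI1 hLMI2 z0.1 z0.2.1 z0.2.2
          (by linarith [hz3]) hz2 hz1.1
      set δ := -(gaux m k kv (Fnl m g vs muC muS vref) (Pg 0 0) (Pg 0 1) (Pg 1 1) z0) with hδdef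
      have hδ0 : 0 < δ := by rw [hδdef]; linarith
      have hdec : ∀ t, 0 ≤ t → gaux m k kv (Fnl m g vs muC muS vref) (Pg 0 0) (Pg 0 1) (Pg 1 1)
          (ε1 t, ε2 t, f t) ≤ -δ := by
        intro t ht
        have := hz0max (hmemK t ht)
        rw [hδdef]; simp only [neg_neg]
        exact this
      have hq0 : 0 ≤ (Wg 0 - 1)/δ := div_nonneg (by linarith) hδ0.le
      have hfinal := decay_lemma hdWg hdec ((Wg 0 - 1)/δ + 1) (by linarith)
      have hlt := hex ((Wg 0 - 1)/δ + 1) (by linarith)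
      have hmul : δ*((Wg 0 - 1)/δ + 1 - 0) = (Wg 0 - 1) + δ := by
        field_simp; ring
      linarith [hfinal, hlt, hmul]
  obtain ⟨T, hT0, hTle⟩ := phaseG
  -- local phase
  set Wl : ℝ → ℝ :=
    fun t => Pl 0 0*(ε1 t)^2 + 2*Pl 0 1*(ε1 t)*(ε2 t) + Pl 1 1*(ε2 t)^2 with hWldef
  have hWlle1 : ∀ t, T ≤ t → Wl t ≤ 1 := by
    intro t ht
    have h2 : Pg 0 0*(ε1 t)^2 + 2*Pg 0 1*(ε1 t)*(ε2 t) + Pg 1 1*(ε2 t)^2 ≤ 1 := hTle t ht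
    show Pl 0 0*(ε1 t)^2 + 2*Pl 0 1*(ε1 t)*(ε2 t) + Pl 1 1*(ε2 t)^2 ≤ 1
    linarith [hVleVg (ε1 t) (ε2 t)]
  have hslip : ∀ t, T ≤ t → 0 < ε1 t + vref := by
    intro t ht
    have h1 : Pl 0 0*(ε1 t)^2 + 2*Pl 0 1*(ε1 t)*(ε2 t) + Pl 1 1*(ε2 t)^2 ≤ 1 := hWlle1 t ht
    have h2 := hx2rl (ε1 t) (ε2 t) h1
    nlinarith [h2, hrl, hrlv]
  have hfs : ∀ t, T ≤ t → f t = Fsf m g vs muC muS (ε1 t + vref) := by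
    intro t ht
    have hv := hslip t ht
    have h2 := (hfr t (le_trans hT0 ht)).2
    rw [abs_of_pos hv] at h2
    have hvne : ε1 t + vref ≠ 0 := ne_of_gt hv
    rw [mul_comm (ε1 t + vref) (Fsf m g vs muC muS (ε1 t + vref))] at h2
    exact mul_right_cancel₀ hvne h2
  have hdWl : ∀ t, T ≤ t → HasDerivAt Wl
      (haux m g vs muC muS vref k kv (Pl 0 0) (Pl 0 1) (Pl 1 1) (ε1 t, ε2 t)) t := by
    intro t ht
    obtain ⟨-, h1, h2⟩ := hsol t (le_trans hT0 ht)
    have hd := quad_deriv (Pl 0 0) (2*Pl 0 1) (Pl 1 1) h1 h2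
    have hval : haux m g vs muC muS vref k kv (Pl 0 0) (Pl 0 1) (Pl 1 1) (ε1 t, ε2 t)
        = 2*(Pl 0 0)*(ε1 t)*(-(1 / m) * (f t - Fnl m g vs muC muS vref)
            - (kv / m) * ε1 t - (k / m) * ε2 t)
          + 2*Pl 0 1*((-(1 / m) * (f t - Fnl m g vs muC muS vref)
            - (kv / m) * ε1 t - (k / m) * ε2 t)*(ε2 t) + (ε1 t)*(ε1 t))
          + 2*(Pl 1 1)*(ε2 t)*(ε1 t) := by
      simp only [haux, hfs t ht, hFst]
    rw [hval]
    exact hd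
  have hlneg : ∀ t, T ≤ t → Wl t ≠ 0 →
      haux m g vs muC muS vref k kv (Pl 0 0) (Pl 0 1) (Pl 1 1) (ε1 t, ε2 t) < 0 := by
    intro t ht hne
    apply claimL m g vs k kv muC muS vref rl lam τ hm hg hvs hmuC hmu hvref hrl hrlv hτ
      hlam Pl hsyml hPhi
    · rintro ⟨hx, hy⟩
      apply hne
      show Pl 0 0*(ε1 t)^2 + 2*Pl 0 1*(ε1 t)*(ε2 t) + Pl 1 1*(ε2 t)^2 = 0
      rw [hx, hy]; ring
    · apply hx2rl (ε1 t) (ε2 t)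
      exact hWlle1 t ht
  -- conclusion via Metric.tendsto_atTop
  rw [Metric.tendsto_atTop]
  intro η hη
  have hc0 : (0:ℝ) < min (αl*η^2/2) 1 := lt_min (by positivity) one_pos
  set c := min (αl*η^2/2) 1 with hcdef
  have hc1 : c ≤ 1 := min_le_right _ _
  have key : ∃ N, T ≤ N ∧ ∀ t, N ≤ t → Wl t ≤ c := by
    by_cases hex2 : ∃ s, T ≤ s ∧ Wl s ≤ c
    · obtain ⟨N, hN1, hN2⟩ := hex2
      refine ⟨N, hN1, barrier_lemma (fun t ht => hdWl t (le_trans hN1 ht)) ?_ hN2⟩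
      intro t ht heq
      exact hlneg t (le_trans hN1 ht) (by rw [heq]; linarith)
    · exfalso
      push_neg at hex2
      set Ql : ℝ×ℝ → ℝ :=
        fun z => Pl 0 0*z.1^2 + 2*Pl 0 1*z.1*z.2 + Pl 1 1*z.2^2 with hQldef
      have hQlc : Continuous Ql := by rw [hQldef]; fun_prop
      set K2 : Set (ℝ×ℝ) := Ql⁻¹' (Set.Icc c 1) with hK2def
      have hK2closed : IsClosed K2 := isClosed_Icc.preimage hQlc
      have hK2bdd : Bornology.IsBounded K2 := by
        rw [Metric.isBounded_iff_subset_closedBall 0]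
        refine ⟨max 1 (1/αl), ?_⟩
        intro z hz
        simp only [hK2def, Set.mem_preimage, Set.mem_Icc] at hz
        have hco := hαl z.1 z.2
        have hzx : z.1^2 ≤ 1/αl := by
          rw [le_div_iff₀ hαl0]
          have : Ql z = Pl 0 0*z.1^2 + 2*Pl 0 1*z.1*z.2 + Pl 1 1*z.2^2 := by rw [hQldef]
          nlinarith [hz.2, hco, sq_nonneg z.2, this]
        have hzy : z.2^2 ≤ 1/αl := by
          rw [le_div_iff₀ hαl0]
          have : Ql z = Pl 0 0*z.1^2 + 2*Pl 0 1*z.1*z.2 + Pl 1 1*z.2^2 := by rw [hQldef]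
          nlinarith [hz.2, hco, sq_nonneg z.1, this]
        rw [Metric.mem_closedBall, dist_zero_right, Prod.norm_def]
        simp only [Real.norm_eq_abs]
        exact max_le (abs_le_max_one hzx) (abs_le_max_one hzy)
      have hK2comp : IsCompact K2 := Metric.isCompact_of_isClosed_isBounded hK2closed hK2bdd
      have hmemK2 : ∀ t, T ≤ t → (ε1 t, ε2 t) ∈ K2 := by
        intro t ht
        simp only [hK2def, Set.mem_preimage, Set.mem_Icc, hQldef]
        have h1 := hex2 t ht
        have h2 := hWlle1 t ht
        rw [hWldef] at h1 h2
        exact ⟨le_of_lt h1, h2⟩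
      have hK2ne : K2.Nonempty := ⟨(ε1 T, ε2 T), hmemK2 T le_rfl⟩
      obtain ⟨z0, hz0K, hz0max⟩ := hK2comp.exists_isMaxOn hK2ne
        ((haux_cont m g vs muC muS vref k kv (Pl 0 0) (Pl 0 1) (Pl 1 1)).continuousOn)
      have hδ : haux m g vs muC muS vref k kv (Pl 0 0) (Pl 0 1) (Pl 1 1) z0 < 0 := by
        simp only [hK2def, Set.mem_preimage, Set.mem_Icc, hQldef] at hz0K
        apply claimL m g vs k kv muC muS vref rl lam τ hm hg hvs hmuC hmu hvref hrl hrlv hτ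
          hlam Pl hsyml hPhi
        · rintro ⟨hx, hy⟩
          obtain ⟨hzc, -⟩ := hz0K
          rw [hx, hy] at hzc
          nlinarith [hzc, hc0]
        · exact hx2rl z0.1 z0.2 hz0K.2
      set δ2 := -(haux m g vs muC muS vref k kv (Pl 0 0) (Pl 0 1) (Pl 1 1) z0) with hδ2def
      have hδ20 : 0 < δ2 := by rw [hδ2def]; linarith
      have hdec : ∀ t, T ≤ t → haux m g vs muC muS vref k kv (Pl 0 0) (Pl 0 1) (Pl 1 1)
          (ε1 t, ε2 t) ≤ -δ2 := by
        intro t ht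
        have := hz0max (hmemK2 t ht)
        rw [hδ2def]; simp only [neg_neg]
        exact this
      have hq2 : 0 ≤ (Wl T - c)/δ2 := div_nonneg (by linarith [hex2 T le_rfl]) hδ20.le
      have hfinal := decay_lemma hdWl hdec (T + (Wl T - c)/δ2 + 1) (by linarith)
      have hlt := hex2 (T + (Wl T - c)/δ2 + 1) (by linarith)
      have hmul : δ2*((T + (Wl T - c)/δ2 + 1) - T) = (Wl T - c) + δ2 := by
        field_simp; ring
      linarith [hfinal, hlt, hmul]
  obtain ⟨N, hNT, hN⟩ := key
  refine ⟨N, ?_⟩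
  intro t ht
  have hWlt : Pl 0 0*(ε1 t)^2 + 2*Pl 0 1*(ε1 t)*(ε2 t) + Pl 1 1*(ε2 t)^2 ≤ c := hN t ht
  have hcoer := hαl (ε1 t) (ε2 t)
  have hcle : c ≤ αl*η^2/2 := min_le_left _ _
  have hmul2 : αl*((ε1 t)^2 + (ε2 t)^2) ≤ αl*(η^2/2) := by linarith
  have hsum : (ε1 t)^2 + (ε2 t)^2 ≤ η^2/2 := le_of_mul_le_mul_left hmul2 hαl0
  have hη2 : (0:ℝ) < η^2 := by positivity
  have hsq1 : (ε1 t)^2 < η^2 := by nlinarith [sq_nonneg (ε2 t)]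
  have hsq2 : (ε2 t)^2 < η^2 := by nlinarith [sq_nonneg (ε1 t)]
  rw [Prod.dist_eq]
  simp only [Real.dist_eq, sub_zero]
  exact max_lt (my_abs_lt_of_sq_lt hsq1 hη) (my_abs_lt_of_sq_lt hsq2 hη)
end
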